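/- arXiv:1103.4518 — 2 statements merged into one kernel-verified Lean document; each statement's English description precedes it below -/
import Mathlib

section
/- Let K be a centrally symmetric convex domain without corners and let G be a balanced hexagon of K with vertices w₀,…,w₅ (in cyclic order, with w_{j+3} = −w_j). Then G does not degenerate to a parallelogram: the six vertices w₀,…,w₅ are pairwise distinct. -/
open MeasureTheory

noncomputable section

/-- The wedge (cross) product of two planar vectors. -/
def wedge (v w : ℝ × ℝ) : ℝ := v.1 * w.2 - v.2 * w.1

/-- A centrally symmetric convex domain in the plane. -/
def IsCSCD (K : Set (ℝ × ℝ)) : Prop :=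
  Convex ℝ K ∧ IsCompact K ∧ (interior K).Nonempty ∧ K = -K

/-- `L` is a supporting line of `K` at the boundary point `p`: it is a level set
of a nonzero linear functional through `p`, and `K` lies on one side of it. -/
def IsSupportingLineAt (K : Set (ℝ × ℝ)) (p : ℝ × ℝ) (L : Set (ℝ × ℝ)) : Prop :=
  ∃ f : (ℝ × ℝ) →ₗ[ℝ] ℝ, f ≠ 0 ∧ L = {x | f x = f p} ∧ ∀ x ∈ K, f x ≤ f p

/-- `K` has no corners: through each boundary point of `K` there passes exactly
one supporting line of `K`. -/
def NoCorners (K : Set (ℝ × ℝ)) : Prop :=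
  ∀ p ∈ frontier K, ∃! L : Set (ℝ × ℝ), IsSupportingLineAt K p L

/-- `w : ZMod 6 → ℝ × ℝ` lists, in counterclockwise cyclic order, the vertices of
a balanced hexagon of `K`: a centrally symmetric hexagon (`w (j+3) = -w j`),
whose vertices are in convex position in cyclic order, containing `K`, and the
midpoint of each of whose sides lies on the boundary of `K`. -/
def IsBalancedHexagon (K : Set (ℝ × ℝ)) (w : ZMod 6 → ℝ × ℝ) : Prop :=
  (∀ j, w (j + 3) = -w j) ∧
  (∀ j, 0 ≤ wedge (w (j + 1) - w j) (w (j + 2) - w (j + 1))) ∧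
  K ⊆ convexHull ℝ (Set.range w) ∧
  (∀ j, midpoint ℝ (w j) (w (j + 1)) ∈ frontier K)

/- ### Auxiliary lemmas -/

lemma zmod6_cases (n : ZMod 6) : n = 0 ∨ n = 1 ∨ n = 2 ∨ n = 3 ∨ n = 4 ∨ n = 5 := by
  revert n; decide

/-- The center of symmetry lies in the interior of a centrally symmetric
convex domain. -/
lemma zero_mem_interior {K : Set (ℝ × ℝ)} (hK : IsCSCD K) : 0 ∈ interior K := by
  obtain ⟨hconv, _, ⟨x, hx⟩, hsymm⟩ := hK
  have hneg : -x ∈ interior K := by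
    have h1 : interior K = -interior K := by
      conv_lhs => rw [hsymm]
      have ha : (-K) = Neg.neg ⁻¹' K := by ext z; simp [Set.mem_neg]
      have hb : (-interior K) = Neg.neg ⁻¹' (interior K) := by ext z; simp [Set.mem_neg]
      rw [ha, hb]
      exact ((Homeomorph.neg (ℝ×ℝ)).preimage_interior K).symm
    rw [h1]
    simpa using hx
  have hci : Convex ℝ (interior K) := hconv.interior
  have := hci hx hneg (by norm_num : (0:ℝ) ≤ 1/2) (by norm_num : (0:ℝ) ≤ 1/2) (by norm_num)
  convert this using 1
  module

/-- A nonzero linear functional (given in wedge form) on `K` cannot attain its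
supremum over `K` at an interior point of `K`. -/
lemma keyA {K : Set (ℝ × ℝ)} {q d : ℝ × ℝ} {c : ℝ} (hq : q ∈ interior K) (hd : d ≠ 0)
    (hle : ∀ x ∈ K, wedge d x ≤ c) (heq : wedge d q = c) : False := by
  obtain ⟨ε, hε, hball⟩ := Metric.isOpen_iff.mp isOpen_interior q hq
  set v : ℝ × ℝ := (-d.2, d.1) with hv
  have hd12 : d.1 ≠ 0 ∨ d.2 ≠ 0 := by
    by_contra hc; push_neg at hc; exact hd (Prod.ext hc.1 hc.2)
  have hvpos : 0 < wedge d v := by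
    simp only [wedge, hv]
    have : d.1 * d.1 - d.2 * -d.2 = d.1^2 + d.2^2 := by ring
    rw [this]
    rcases hd12 with h1 | h1 <;> positivity
  have hvn : (0:ℝ) < ‖v‖ + 1 := by positivity
  set t : ℝ := ε / (‖v‖ + 1) with ht
  have htpos : 0 < t := by positivity
  have hmem : q + t • v ∈ K := by
    apply interior_subset
    apply hball
    rw [Metric.mem_ball, dist_eq_norm]
    have h3 : q + t • v - q = t • v := by abel
    rw [h3, norm_smul, Real.norm_eq_abs, abs_of_pos htpos]
    have hnv : (0:ℝ) ≤ ‖v‖ := norm_nonneg v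
    calc t * ‖v‖ < t * (‖v‖ + 1) := by nlinarith
    _ = ε := by rw [ht]; field_simp
  have h2 := hle _ hmem
  have hlin : wedge d (q + t • v) = wedge d q + t * wedge d v := by
    simp only [wedge, Prod.fst_add, Prod.snd_add, Prod.smul_fst, Prod.smul_snd, smul_eq_mul]
    ring
  rw [hlin, heq] at h2
  nlinarith

/-- Every side line of a balanced hexagon has all of `K` on its left. -/
lemma side_support {K : Set (ℝ × ℝ)} {w : ZMod 6 → ℝ × ℝ} (hw : IsBalancedHexagon K w)
    (j : ZMod 6) : ∀ x ∈ K, 0 ≤ wedge (w (j+1) - w j) (x - w j) := by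
  obtain ⟨hsym, hwedge, hsub, -⟩ := hw
  intro x hx
  have hx' : x ∈ convexHull ℝ (Set.range w) := hsub hx
  have h1 := hwedge j
  have h2 := hwedge (j+5)
  have hs5 : w (j + 5) = -w (j + 2) := by
    have := hsym (j + 2); rw [show j + 2 + 3 = j + 5 by ring] at this; exact this
  have e60 : (6 : ZMod 6) = 0 := by decide
  rw [show j + 5 + 1 = j + 6 by ring, show j + 5 + 2 = j + 6 + 1 by ring, e60,
      add_zero, hs5] at h2
  have hs3 : w (j + 3) = -w j := hsym j
  have hs4 : w (j + 4) = -w (j + 1) := by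
    have := hsym (j + 1); rw [show j + 1 + 3 = j + 4 by ring] at this; exact this
  set a := w j with ha
  set b := w (j + 1) with hb
  set c := w (j + 2) with hc
  have hconv : Convex ℝ {x : ℝ×ℝ | 0 ≤ wedge (b - a) (x - a)} := by
    have hset : {x : ℝ×ℝ | 0 ≤ wedge (b - a) (x - a)}
        = {x : ℝ×ℝ | wedge (b - a) a ≤ wedge (b - a) x} := by
      ext z
      simp only [Set.mem_setOf_eq, wedge, Prod.fst_sub, Prod.snd_sub]
      constructor <;> intro h <;> nlinarith [h]
    rw [hset]
    exact convex_halfSpace_ge (by constructor <;> intros <;> simp [wedge] <;> ring) _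
  have hrange : Set.range w ⊆ {x : ℝ×ℝ | 0 ≤ wedge (b - a) (x - a)} := by
    rintro - ⟨k, rfl⟩
    obtain ⟨m, rfl⟩ : ∃ m : ZMod 6, k = j + m := ⟨k - j, by ring⟩
    simp only [wedge, Prod.fst_sub, Prod.snd_sub, Prod.fst_neg, Prod.snd_neg,
      sub_neg_eq_add, Prod.fst_add, Prod.snd_add] at h1 h2 ⊢
    rcases zmod6_cases m with rfl | rfl | rfl | rfl | rfl | rfl
    · simp only [add_zero, ← ha, Set.mem_setOf_eq]; nlinarith [h1, h2]
    · simp only [Set.mem_setOf_eq, ← hb]; nlinarith [h1, h2]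
    · simp only [Set.mem_setOf_eq, ← hc]; nlinarith [h1, h2]
    · simp only [Set.mem_setOf_eq, hs3, Prod.fst_neg, Prod.snd_neg]; nlinarith [h1, h2]
    · simp only [Set.mem_setOf_eq, hs4, Prod.fst_neg, Prod.snd_neg]; nlinarith [h1, h2]
    · simp only [Set.mem_setOf_eq, hs5, Prod.fst_neg, Prod.snd_neg]; nlinarith [h1, h2]
  exact convexHull_min hrange hconv hx'

/-- The linear functional `x ↦ -wedge d x`, as a bundled linear map. -/
def wedgeLin (d : ℝ × ℝ) : (ℝ × ℝ) →ₗ[ℝ] ℝ :=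
  d.2 • LinearMap.fst ℝ ℝ ℝ - d.1 • LinearMap.snd ℝ ℝ ℝ

lemma wedgeLin_apply (d x : ℝ × ℝ) : wedgeLin d x = - wedge d x := by
  simp only [wedgeLin, wedge, LinearMap.sub_apply, LinearMap.smul_apply,
    LinearMap.fst_apply, LinearMap.snd_apply, smul_eq_mul]
  ring

lemma wedgeLin_ne_zero {d : ℝ × ℝ} (hd : d ≠ 0) : wedgeLin d ≠ 0 := by
  intro h
  have h1 : wedgeLin d (d.2, -d.1) = 0 := by rw [h]; rfl
  rw [wedgeLin_apply] at h1
  simp only [wedge] at h1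
  have hd12 : d.1 ≠ 0 ∨ d.2 ≠ 0 := by
    by_contra hc; push_neg at hc; exact hd (Prod.ext hc.1 hc.2)
  rcases hd12 with h2 | h2 <;> nlinarith [mul_self_pos.mpr h2, mul_self_nonneg d.1,
    mul_self_nonneg d.2]

/-- A side with all of `K` on its left induces a supporting line at any of its
points. -/
lemma isSupportingLineAt_of {K : Set (ℝ × ℝ)} (p : ℝ × ℝ) {d : ℝ × ℝ} (hd : d ≠ 0)
    (hside : ∀ x ∈ K, 0 ≤ wedge d (x - p)) :
    IsSupportingLineAt K p {x | wedgeLin d x = wedgeLin d p} := by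
  refine ⟨wedgeLin d, wedgeLin_ne_zero hd, rfl, fun x hx => ?_⟩
  have h1 := hside x hx
  rw [wedgeLin_apply, wedgeLin_apply]
  have h2 : wedge d (x - p) = wedge d x - wedge d p := by
    simp [wedge, Prod.fst_sub, Prod.snd_sub]; ring
  linarith [h2 ▸ h1]

lemma not_mem_interior_of_frontier {K : Set (ℝ × ℝ)} {z : ℝ × ℝ} (h : z ∈ frontier K) :
    z ∉ interior K := by
  rw [frontier] at h; exact h.2

/-- Case: two antipodal vertices coincide (so both are the origin). -/
lemma case_opp {K : Set (ℝ × ℝ)} (hK : IsCSCD K) {w : ZMod 6 → ℝ × ℝ}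
    (hw : IsBalancedHexagon K w) (j : ZMod 6) (h : w j = w (j + 3)) : False := by
  have h0 : 0 ∈ interior K := zero_mem_interior hK
  have hj0 : w j = 0 := by
    have h3 := hw.1 j
    rw [h3] at h
    have h4 : (w j).1 = -(w j).1 ∧ (w j).2 = -(w j).2 := by
      constructor
      · exact congrArg Prod.fst h
      · exact congrArg Prod.snd h
    have : (w j).1 = 0 := by linarith [h4.1]
    have : (w j).2 = 0 := by linarith [h4.2]
    exact Prod.ext ‹(w j).1 = 0› ‹(w j).2 = 0›
  by_cases hd : w (j+1) - w j = 0
  · have hu := hw.2.2.2 j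
    have hzz : midpoint ℝ (w j) (w (j+1)) = 0 := by
      have : w (j+1) = w j := by rwa [sub_eq_zero] at hd
      rw [this, midpoint_self, hj0]
    rw [hzz] at hu
    exact not_mem_interior_of_frontier hu h0
  · have hside := side_support hw j
    apply keyA (c := 0) h0 (neg_ne_zero.mpr hd)
    · intro x hx
      have h1 := hside x hx
      simp only [wedge, Prod.fst_sub, Prod.snd_sub, Prod.fst_neg, Prod.snd_neg, hj0,
        Prod.fst_zero, Prod.snd_zero] at h1 ⊢
      nlinarith [h1]
    · simp [wedge]

/-- Case: two vertices at distance two coincide. -/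
lemma case_skip {K : Set (ℝ × ℝ)} (hK : IsCSCD K) {w : ZMod 6 → ℝ × ℝ}
    (hw : IsBalancedHexagon K w) (j : ZMod 6) (h : w j = w (j + 2)) : False := by
  have h0 : 0 ∈ interior K := zero_mem_interior hK
  by_cases hd : w (j+1) - w j = 0
  · -- then w j = w (j+1) = w (j+2), and the midpoint of side j+2 is the origin
    have hu := hw.2.2.2 (j+2)
    rw [show j+2+1 = j+3 by ring, hw.1 j, ← h, midpoint_self_neg] at hu
    exact not_mem_interior_of_frontier hu h0
  · have hside1 := side_support hw j
    have hside2 := side_support hw (j+1)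
    rw [show j+1+1 = j+2 by ring] at hside2
    have t1 := hside1 0 (interior_subset h0)
    have t2 := hside2 0 (interior_subset h0)
    have hb : w (j+2) = w j := h.symm
    have hb1 : w (j+1) = (w (j+1) - w j) + w j := by abel
    apply keyA (c := wedge (-(w (j+1) - w j)) (w j)) h0 (neg_ne_zero.mpr hd)
    · intro x hx
      have h1 := hside1 x hx
      simp only [wedge, Prod.fst_sub, Prod.snd_sub, Prod.fst_neg, Prod.snd_neg] at h1 ⊢
      nlinarith [h1]
    · -- wedge (-(d)) 0 = wedge (-(d)) (w j), i.e. wedge d (w j) = 0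
      rw [hb] at t2
      simp only [wedge, Prod.fst_sub, Prod.snd_sub, Prod.fst_neg, Prod.snd_neg,
        Prod.fst_zero, Prod.snd_zero] at t1 t2 ⊢
      have hb1' : (w (j+1)).1 = (w (j+1)).1 - (w j).1 + (w j).1 := by ring
      nlinarith [t1, t2]

/-- Case: two adjacent vertices coincide. -/
lemma case_adj {K : Set (ℝ × ℝ)} (hK : IsCSCD K) (hnc : NoCorners K)
    {w : ZMod 6 → ℝ × ℝ} (hw : IsBalancedHexagon K w) (j : ZMod 6)
    (h : w j = w (j + 1)) : False := by
  have h0 : 0 ∈ interior K := zero_mem_interior hK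
  have hp : w j ∈ frontier K := by
    have := hw.2.2.2 j
    rwa [← h, midpoint_self] at this
  have hs5 : w (j + 5) = -w (j + 2) := by
    have := hw.1 (j + 2); rw [show j + 2 + 3 = j + 5 by ring] at this; exact this
  have e60 : (6 : ZMod 6) = 0 := by decide
  set A := w j with hA
  set C := w (j + 2) with hC
  -- side j+1 supports K with direction C - A, basepoint A
  have hside1 : ∀ x ∈ K, 0 ≤ wedge (C - A) (x - A) := by
    have := side_support hw (j+1)
    rw [show j+1+1 = j+2 by ring, ← h] at this
    exact this
  -- side j+5 supports K with direction A + C, basepoint A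
  have hside5 : ∀ x ∈ K, 0 ≤ wedge (A + C) (x - A) := by
    intro x hx
    have h5 := side_support hw (j+5) x hx
    rw [show j+5+1 = j+6 by ring, e60, add_zero, hs5] at h5
    -- h5 : 0 ≤ wedge (w j - -C) (x - -C)
    simp only [wedge, Prod.fst_sub, Prod.snd_sub, Prod.fst_neg, Prod.snd_neg,
      sub_neg_eq_add, Prod.fst_add, Prod.snd_add, ← hA] at h5 ⊢
    nlinarith [h5]
  by_cases hperp : wedge (A + C) (C - A) = 0
  · -- degenerate: A and C are collinear with the origin
    have hAC : wedge A C = 0 := by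
      simp only [wedge, Prod.fst_add, Prod.snd_add, Prod.fst_sub, Prod.snd_sub] at hperp ⊢
      nlinarith [hperp]
    by_cases hd1 : C - A = 0
    · -- w j = w (j+1) = w (j+2); the midpoint of side j+2 is the origin
      have hu := hw.2.2.2 (j+2)
      have hCA : w (j+2) = w j := by rwa [sub_eq_zero] at hd1
      rw [show j+2+1 = j+3 by ring, hw.1 j, hCA, midpoint_self_neg] at hu
      exact not_mem_interior_of_frontier hu h0
    · -- the side line through A and C passes through the origin
      apply keyA (c := 0) h0 (neg_ne_zero.mpr hd1)
      · intro x hx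
        have h1 := hside1 x hx
        simp only [wedge, Prod.fst_sub, Prod.snd_sub, Prod.fst_neg, Prod.snd_neg] at h1 hAC ⊢
        nlinarith [h1, hAC]
      · simp [wedge]
  · -- main case: two distinct supporting lines at w j, contradicting NoCorners
    have hd1 : C - A ≠ 0 := by
      intro hz; rw [hz] at hperp; simp [wedge] at hperp
    have he5 : A + C ≠ 0 := by
      intro hz; rw [hz] at hperp; simp [wedge] at hperp
    have sup5 := isSupportingLineAt_of (K := K) A he5 hside5
    have sup1 := isSupportingLineAt_of (K := K) A hd1 hside1
    obtain ⟨L, -, huniq⟩ := hnc A hp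
    have hLL : {x : ℝ×ℝ | wedgeLin (A + C) x = wedgeLin (A + C) A}
        = {x : ℝ×ℝ | wedgeLin (C - A) x = wedgeLin (C - A) A} :=
      (huniq _ sup5).trans (huniq _ sup1).symm
    have hmem1 : A + (C - A) ∈ {x : ℝ×ℝ | wedgeLin (C - A) x = wedgeLin (C - A) A} := by
      simp only [Set.mem_setOf_eq, map_add]
      have : wedgeLin (C - A) (C - A) = 0 := by
        rw [wedgeLin_apply]; simp [wedge]; ring
      rw [this, add_zero]
    rw [← hLL] at hmem1
    simp only [Set.mem_setOf_eq, map_add] at hmem1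
    have : wedgeLin (A + C) (C - A) = 0 := by linarith [hmem1]
    rw [wedgeLin_apply] at this
    exact hperp (by linarith [this])

/-- A balanced hexagon of a centrally symmetric convex domain without corners does
not degenerate to a parallelogram: its six vertices are pairwise distinct. -/
theorem balancedHexagon_vertices_distinct (K : Set (ℝ × ℝ)) (hK : IsCSCD K)
    (hnc : NoCorners K) (w : ZMod 6 → ℝ × ℝ) (hw : IsBalancedHexagon K w) :
    Function.Injective w := by
  intro a b hab
  by_contra hne
  obtain ⟨m, rfl⟩ : ∃ m : ZMod 6, b = a + m := ⟨b - a, by ring⟩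
  rcases zmod6_cases m with rfl | rfl | rfl | rfl | rfl | rfl
  · exact hne (by rw [add_zero])
  · exact case_adj hK hnc hw a hab
  · exact case_skip hK hw a hab
  · exact case_opp hK hw a hab
  · -- w a = w (a+4) implies w (a+1) = w (a+1+2)
    apply case_skip hK hw (a+1)
    have h1 : w (a + 1) = -w (a + 4) := by
      have h2 := hw.1 (a + 4)
      rw [show a + 4 + 3 = a + 1 from by
        have h7 : (7 : ZMod 6) = 1 := by decide
        calc a + 4 + 3 = a + 7 := by ring
        _ = a + 1 := by rw [h7]] at h2
      exact h2
    rw [show a + 1 + 2 = a + 3 by ring, hw.1 a, h1, hab]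
  · -- w a = w (a+5) implies w (a+2) = w (a+2+1)
    apply case_adj hK hnc hw (a+2)
    have h1 : w (a + 2) = -w (a + 5) := by
      have h2 := hw.1 (a + 5)
      rw [show a + 5 + 3 = a + 2 from by
        have h8 : (8 : ZMod 6) = 2 := by decide
        calc a + 5 + 3 = a + 8 := by ring
        _ = a + 2 := by rw [h8]] at h2
      exact h2
    rw [show a + 2 + 1 = a + 3 by ring, hw.1 a, h1, hab]
end
end

section
/- Let G be a balanced hexagon of a centrally symmetric convex domain K centered at the origin, with vertices w₀,…,w₅ in counterclockwise cyclic convex position satisfying w_{j+3} = −w_j, and midpoints u_j = (w_j + w_{j+1})/2 (indices mod 6). Then: (i) u_j + u_{j+2} + u_{j+4} = 0 for all j; (ii) u_{j+3} = −u_j for all j; (iii) the area of G equals 4/3 times the area of the hexagon H = convexHull{u₀,…,u₅}; (iv) the area of G equals 8 times the area of the triangle with vertices 0, u_j, u_{j+2}, i.e., area(G) = 4·(u_j ∧ u_{j+2}), where v ∧ w denotes the determinant of the 2×2 matrix with columns v and w. -/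
open MeasureTheory

noncomputable section

/-!
Fanning a centrally symmetric convex hexagon `w` from its centre into the triangles
`0, w j, w (j + 1)` gives the shoelace formula `area = ½ ∑ⱼ w j ∧ w (j + 1)`. Two of these
triangles meet only on a line through the origin and a vertex, and a point off all these lines
lies in the triangle of the sector containing it, located by a sign change of the antiperiodic
function `j ↦ w j ∧ x`; a hexagon with vanishing wedge sum is flat.

The midpoints `u` form a centrally symmetric convex hexagon again, with
`u (j + 2) = u (j + 1) - u j`, and both `u j ∧ u (j + 1)` and `u j ∧ u (j + 2)` are one eighth of
`∑ⱼ w j ∧ w (j + 1)`. Hence area G = 4 u j ∧ u (j + 2), while area H = ½ · 6 · u j ∧ u (j + 1)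
= ¾ area G.
-/

open Function Set

section Wedge

@[simp] lemma wedge_self (a : ℝ × ℝ) : wedge a a = 0 := by simp only [wedge]; ring

@[simp] lemma wedge_zero_left (a : ℝ × ℝ) : wedge 0 a = 0 := by simp [wedge]

@[simp] lemma wedge_zero_right (a : ℝ × ℝ) : wedge a 0 = 0 := by simp [wedge]

@[simp] lemma wedge_neg_left (a b : ℝ × ℝ) : wedge (-a) b = -wedge a b := by
  simp only [wedge, Prod.fst_neg, Prod.snd_neg]; ring

@[simp] lemma wedge_neg_right (a b : ℝ × ℝ) : wedge a (-b) = -wedge a b := by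
  simp only [wedge, Prod.fst_neg, Prod.snd_neg]; ring

@[simp] lemma wedge_sub_left (a b c : ℝ × ℝ) : wedge (a - b) c = wedge a c - wedge b c := by
  simp only [wedge, Prod.fst_sub, Prod.snd_sub]; ring

@[simp] lemma wedge_sub_right (a b c : ℝ × ℝ) : wedge a (b - c) = wedge a b - wedge a c := by
  simp only [wedge, Prod.fst_sub, Prod.snd_sub]; ring

lemma wedge_anticomm (a b : ℝ × ℝ) : wedge b a = -wedge a b := by simp only [wedge]; ring

def wedgeₗ : (ℝ × ℝ) →ₗ[ℝ] (ℝ × ℝ) →ₗ[ℝ] ℝ :=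
  LinearMap.mk₂ ℝ wedge (fun _ _ _ => by simp only [wedge, Prod.fst_add, Prod.snd_add]; ring)
    (fun _ _ _ => by simp only [wedge, Prod.smul_fst, Prod.smul_snd, smul_eq_mul]; ring)
    (fun _ _ _ => by simp only [wedge, Prod.fst_add, Prod.snd_add]; ring)
    (fun _ _ _ => by simp only [wedge, Prod.smul_fst, Prod.smul_snd, smul_eq_mul]; ring)

@[simp] lemma wedgeₗ_apply (a b : ℝ × ℝ) : wedgeₗ a b = wedge a b := rfl

lemma wedge_mul_wedge_add_wedge_mul (a b c x : ℝ × ℝ) :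
    wedge a x * wedge b c + wedge x b * wedge a c = wedge a b * wedge x c := by
  simp only [wedge]; ring

lemma wedge_smul_eq_smul_add_smul (a b x : ℝ × ℝ) :
    wedge a b • x = wedge x b • a + wedge a x • b := by
  ext <;> simp only [wedge, Prod.smul_fst, Prod.smul_snd, Prod.fst_add, Prod.snd_add,
    smul_eq_mul] <;> ring

lemma volume_setOf_wedge_eq_zero {a : ℝ × ℝ} (ha : a ≠ 0) : volume {x | wedge a x = 0} = 0 := by
  refine Measure.addHaar_submodule volume (LinearMap.ker (wedgeₗ a)) fun htop => ?_
  have h : wedge a (-a.2, a.1) = 0 := by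
    simpa using (LinearMap.mem_ker (f := wedgeₗ a)).1 (htop ▸ Submodule.mem_top)
  have : a.1 ^ 2 + a.2 ^ 2 = 0 := by simp only [wedge] at h; linarith
  exact ha (Prod.ext (by simp only [Prod.fst_zero]; nlinarith)
    (by simp only [Prod.snd_zero]; nlinarith))

lemma volume_convexHull_eq_zero_of_wedge_eq_zero {ι : Type*} {v : ι → ℝ × ℝ}
    (h : ∀ i j, wedge (v i) (v j) = 0) : volume (convexHull ℝ (range v)) = 0 := by
  obtain ⟨m, hm₀, hm⟩ : ∃ m ≠ 0, ∀ i, wedge m (v i) = 0 := by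
    by_cases hv : ∃ i, v i ≠ 0
    · obtain ⟨i, hi⟩ := hv
      exact ⟨v i, hi, h i⟩
    · simp only [not_exists, not_not] at hv
      exact ⟨(1, 0), by simp, fun i => by simp [hv i]⟩
  exact measure_mono_null (convexHull_min (range_subset_iff.2 hm)
    (convex_hyperplane (wedgeₗ m).isLinear 0)) (volume_setOf_wedge_eq_zero hm₀)

end Wedge

section Triangle

def stdTriangle : Set (ℝ × ℝ) := {p | 0 ≤ p.1 ∧ 0 ≤ p.2 ∧ p.1 + p.2 ≤ 1}

lemma convex_stdTriangle : Convex ℝ stdTriangle := by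
  rintro x ⟨hx₁, hx₂, hx₃⟩ y ⟨hy₁, hy₂, hy₃⟩ s t hs ht hst
  simp only [stdTriangle, mem_ofPred_eq, Prod.fst_add, Prod.snd_add, Prod.smul_fst,
    Prod.smul_snd, smul_eq_mul]
  refine ⟨by positivity, by positivity, ?_⟩
  nlinarith

lemma volume_stdTriangle : volume stdTriangle = ENNReal.ofReal (1 / 2) := by
  have hmeas : MeasurableSet stdTriangle :=
    (measurableSet_le measurable_const measurable_fst).inter
      ((measurableSet_le measurable_const measurable_snd).inter
        (measurableSet_le (measurable_fst.add measurable_snd) measurable_const))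
  have hslice : ∀ x : ℝ, volume (Prod.mk x ⁻¹' stdTriangle) =
      (Icc 0 1).indicator (fun x => ENNReal.ofReal (1 - x)) x := by
    intro x
    by_cases hx : x ∈ Icc (0 : ℝ) 1
    · have : Prod.mk x ⁻¹' stdTriangle = Icc 0 (1 - x) := by
        ext y
        simp only [stdTriangle, mem_preimage, mem_ofPred_eq, mem_Icc]
        exact ⟨fun h => ⟨h.2.1, by linarith⟩, fun h => ⟨hx.1, h.1, by linarith⟩⟩
      simp [this, hx]
    · have : Prod.mk x ⁻¹' stdTriangle = ∅ := by
        ext y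
        simp only [stdTriangle, mem_preimage, mem_ofPred_eq, mem_empty_iff_false, iff_false]
        rintro ⟨h₁, h₂, h₃⟩
        exact hx ⟨h₁, by linarith⟩
      simp [this, hx]
  rw [Measure.volume_eq_prod, Measure.prod_apply hmeas]
  simp_rw [hslice]
  rw [lintegral_indicator measurableSet_Icc, ← ofReal_integral_eq_lintegral_ofReal]
  · rw [integral_Icc_eq_integral_Ioc, ← intervalIntegral.integral_of_le zero_le_one,
      intervalIntegral.integral_sub intervalIntegrable_const
        intervalIntegral.intervalIntegrable_id]
    norm_num
  · exact (continuous_const.sub continuous_id).integrableOn_Icc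
  · filter_upwards [ae_restrict_mem measurableSet_Icc] with x hx
    exact sub_nonneg.2 hx.2

lemma convexHull_zero_pair_subset_setOf_nonneg {E : Type*} [AddCommGroup E] [Module ℝ E]
    (f : E →ₗ[ℝ] ℝ) {a b : E} (ha : 0 ≤ f a) (hb : 0 ≤ f b) :
    convexHull ℝ {0, a, b} ⊆ {x | 0 ≤ f x} :=
  convexHull_min (by rintro _ (rfl | rfl | rfl) <;> simp [*]) (convex_halfSpace_ge f.isLinear 0)

lemma smul_add_smul_mem_convexHull_zero_pair {E : Type*} [AddCommGroup E] [Module ℝ E]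
    (a b : E) {α β : ℝ} (hα : 0 ≤ α) (hβ : 0 ≤ β) (hαβ : α + β ≤ 1) :
    α • a + β • b ∈ convexHull ℝ {0, a, b} := by
  simpa [Fin.sum_univ_three] using (convex_convexHull ℝ ({0, a, b} : Set E)).sum_mem
    (t := Finset.univ) (w := ![α, β, 1 - (α + β)]) (z := ![a, b, 0])
    (fun i _ => by fin_cases i <;> simp [hα, hβ, hαβ])
    (by simp [Fin.sum_univ_three])
    (fun i _ => subset_convexHull ℝ _ (by fin_cases i <;> simp))

lemma mem_convexHull_zero_pair_of_wedge {a b x : ℝ × ℝ} (hab : 0 < wedge a b)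
    (ha : 0 ≤ wedge a x) (hb : 0 ≤ wedge x b) (hx : wedge a x + wedge x b ≤ wedge a b) :
    x ∈ convexHull ℝ {0, a, b} := by
  have hx' : x = (wedge x b / wedge a b) • a + (wedge a x / wedge a b) • b := by
    rw [div_eq_inv_mul, div_eq_inv_mul, mul_smul, mul_smul, ← smul_add,
      ← wedge_smul_eq_smul_add_smul, inv_smul_smul₀ hab.ne']
  rw [hx']
  refine smul_add_smul_mem_convexHull_zero_pair a b (by positivity) (by positivity) ?_
  rw [← add_div, div_le_one hab]
  linarith

lemma convexHull_zero_pair_eq_image (a b : ℝ × ℝ) :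
    convexHull ℝ {0, a, b} =
      (LinearMap.toSpanSingleton ℝ _ a).coprod (LinearMap.toSpanSingleton ℝ _ b) '' stdTriangle := by
  refine (convexHull_min ?_ (convex_stdTriangle.linear_image _)).antisymm ?_
  · rintro _ (rfl | rfl | rfl)
    · exact ⟨0, by norm_num [stdTriangle], by simp⟩
    · exact ⟨(1, 0), by norm_num [stdTriangle], by simp⟩
    · exact ⟨(0, 1), by norm_num [stdTriangle], by simp⟩
  · rintro _ ⟨p, ⟨hp₁, hp₂, hp₃⟩, rfl⟩
    exact smul_add_smul_mem_convexHull_zero_pair a b hp₁ hp₂ hp₃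

lemma det_coprod_toSpanSingleton (a b : ℝ × ℝ) :
    LinearMap.det ((LinearMap.toSpanSingleton ℝ _ a).coprod (LinearMap.toSpanSingleton ℝ _ b)) =
      wedge a b := by
  rw [← LinearMap.det_toMatrix (Module.Basis.finTwoProd ℝ), Matrix.det_fin_two]
  simp [LinearMap.toMatrix_apply, wedge, mul_comm]

lemma volume_convexHull_zero_pair (a b : ℝ × ℝ) :
    volume (convexHull ℝ {0, a, b}) = ENNReal.ofReal (|wedge a b| / 2) := by
  rw [convexHull_zero_pair_eq_image, Measure.addHaar_image_linearMap, det_coprod_toSpanSingleton,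
    volume_stdTriangle, ← ENNReal.ofReal_mul (abs_nonneg _)]
  ring_nf

end Triangle

lemma Function.Periodic.zmod_apply_eq_apply_zero {n : ℕ} [NeZero n] {α : Type*}
    {f : ZMod n → α} (h : Periodic f 1) (j : ZMod n) : f j = f 0 := by
  simpa [ZMod.natCast_zmod_val] using h.nat_mul_eq j.val

lemma Function.Antiperiodic.exists_pos_and_succ_neg {ι : Type*} [AddMonoidWithOne ι]
    {σ : ι → ℝ} (h : Antiperiodic σ 3) (h₀ : ∀ j, σ j ≠ 0) : ∃ j, 0 < σ j ∧ σ (j + 1) < 0 := by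
  by_contra! hσ
  have step : ∀ j, 0 < σ j → 0 < σ (j + 1) := fun j hj => (hσ j hj).lt_of_ne' (h₀ _)
  obtain ⟨j, hj⟩ : ∃ j, 0 < σ j := by
    rcases (h₀ 0).lt_or_gt with h' | h'
    · exact ⟨0 + 3, by rw [h]; linarith⟩
    · exact ⟨0, h'⟩
  have h₃ := step _ (step _ (step _ hj))
  rw [add_assoc j, one_add_one_eq_two, add_assoc, two_add_one_eq_three, h] at h₃
  linarith

lemma Function.Antiperiodic.apply_eq_or_eq_neg {β : Type*} [Neg β] {f : ZMod 6 → β}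
    (hs : Antiperiodic f 3) (j k : ZMod 6) :
    f k = f j ∨ f k = f (j + 1) ∨ f k = f (j + 2) ∨
      f k = -f j ∨ f k = -f (j + 1) ∨ f k = -f (j + 2) := by
  obtain ⟨d, rfl⟩ : ∃ d, k = j + d := ⟨k - j, by abel⟩
  have hd : d = 0 ∨ d = 1 ∨ d = 2 ∨ d = 3 ∨ d = 4 ∨ d = 5 := by revert d; decide
  rcases hd with rfl | rfl | rfl | rfl | rfl | rfl
  · simp
  · simp
  · simp
  · simp [hs j]
  · simp [show j + 4 = j + 1 + 3 by ring, hs (j + 1)]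
  · simp [show j + 5 = j + 2 + 3 by ring, hs (j + 2)]

structure IsSymmetricConvexHexagon (w : ZMod 6 → ℝ × ℝ) : Prop where
  antiperiodic : Antiperiodic w 3
  wedge_sub_nonneg : ∀ j, 0 ≤ wedge (w (j + 1) - w j) (w (j + 2) - w (j + 1))

section SymmetricHexagon

variable {w : ZMod 6 → ℝ × ℝ}

lemma wedge_succ_add_three (hs : Antiperiodic w 3) (j : ZMod 6) :
    wedge (w (j + 3)) (w (j + 3 + 1)) = wedge (w j) (w (j + 1)) := by
  rw [add_right_comm, hs, hs, wedge_neg_left, wedge_neg_right, neg_neg]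

lemma wedge_add_two_eq (hs : Antiperiodic w 3) (j : ZMod 6) :
    wedge (w j) (w (j + 2)) = wedge (w (j + 2)) (w (j + 3)) := by
  rw [hs, wedge_neg_right, wedge_anticomm (w (j + 2))]

lemma wedge_add_wedge_add_wedge_eq (hs : Antiperiodic w 3) (j : ZMod 6) :
    wedge (w j) (w (j + 1)) + wedge (w (j + 1)) (w (j + 2)) + wedge (w (j + 2)) (w (j + 3)) =
      wedge (w 0) (w 1) + wedge (w 1) (w 2) + wedge (w 2) (w 3) := by
  refine Periodic.zmod_apply_eq_apply_zero (f := fun j => wedge (w j) (w (j + 1)) +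
    wedge (w (j + 1)) (w (j + 2)) + wedge (w (j + 2)) (w (j + 3))) (fun i => ?_) j |>.trans ?_
  · dsimp only
    rw [show i + 1 + 1 = i + 2 by ring, show i + 1 + 2 = i + 3 by ring,
      show i + 1 + 3 = i + 3 + 1 by ring, wedge_succ_add_three hs]
    ring
  · simp

lemma sum_wedge_succ_eq (hs : Antiperiodic w 3) (j : ZMod 6) :
    ∑ i, wedge (w i) (w (i + 1)) = 2 * (wedge (w j) (w (j + 1)) +
      wedge (w (j + 1)) (w (j + 2)) + wedge (w (j + 2)) (w (j + 3))) := by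
  have shift (c : ZMod 6) :
      ∑ i, wedge (w (i + c)) (w (i + (c + 1))) = ∑ i, wedge (w i) (w (i + 1)) :=
    Fintype.sum_equiv (Equiv.addRight c) _ _ fun i => by simp [add_assoc]
  calc ∑ i, wedge (w i) (w (i + 1))
      = (∑ i, (wedge (w i) (w (i + 1)) + wedge (w (i + 1)) (w (i + (1 + 1))) +
          wedge (w (i + 2)) (w (i + (2 + 1))))) / 3 := by
        rw [Finset.sum_add_distrib, Finset.sum_add_distrib, shift 1, shift 2]
        ring
    _ = (∑ _i : ZMod 6, (wedge (w j) (w (j + 1)) + wedge (w (j + 1)) (w (j + 2)) +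
          wedge (w (j + 2)) (w (j + 3)))) / 3 := by
        refine congrArg (· / 3) (Finset.sum_congr rfl fun i _ => ?_)
        rw [one_add_one_eq_two, two_add_one_eq_three, wedge_add_wedge_add_wedge_eq hs,
          wedge_add_wedge_add_wedge_eq hs]
    _ = _ := by
        rw [Finset.sum_const, Finset.card_univ, ZMod.card, nsmul_eq_mul]
        ring

lemma convexHull_zero_pair_subset_convexHull (hs : Antiperiodic w 3) (j : ZMod 6) :
    convexHull ℝ {0, w j, w (j + 1)} ⊆ convexHull ℝ (range w) := by
  have h₀ : (0 : ℝ × ℝ) ∈ convexHull ℝ (range w) := by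
    have := (convex_convexHull ℝ (range w)).midpoint_mem
      (subset_convexHull ℝ _ ⟨0, rfl⟩) (subset_convexHull ℝ _ ⟨0 + 3, rfl⟩)
    rwa [hs 0, midpoint_self_neg] at this
  refine convexHull_min ?_ (convex_convexHull ℝ _)
  rintro _ (rfl | rfl | rfl)
  exacts [h₀, subset_convexHull ℝ _ ⟨j, rfl⟩, subset_convexHull ℝ _ ⟨j + 1, rfl⟩]

namespace IsSymmetricConvexHexagon

lemma wedge_add_two_le (hw : IsSymmetricConvexHexagon w) (j : ZMod 6) :
    wedge (w j) (w (j + 2)) ≤ wedge (w j) (w (j + 1)) + wedge (w (j + 1)) (w (j + 2)) := by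
  have := hw.wedge_sub_nonneg j
  simp only [wedge_sub_left, wedge_sub_right, wedge_self] at this
  linarith

lemma wedge_succ_le (hw : IsSymmetricConvexHexagon w) (j : ZMod 6) :
    wedge (w (j + 1)) (w (j + 2)) ≤ wedge (w j) (w (j + 1)) + wedge (w j) (w (j + 2)) := by
  have := hw.wedge_sub_nonneg (j + 2)
  rw [show j + 2 + 1 = j + 3 by ring, show j + 2 + 2 = j + 1 + 3 by ring, hw.antiperiodic,
    hw.antiperiodic] at this
  simp only [wedge_sub_left, wedge_sub_right, wedge_neg_left, wedge_neg_right, wedge_self] at this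
  linarith [wedge_anticomm (w j) (w (j + 2)), wedge_anticomm (w (j + 1)) (w (j + 2))]

lemma wedge_succ_nonneg (hw : IsSymmetricConvexHexagon w) (j : ZMod 6) :
    0 ≤ wedge (w j) (w (j + 1)) := by
  linarith [hw.wedge_add_two_le j, hw.wedge_succ_le j]

lemma wedge_add_two_nonneg (hw : IsSymmetricConvexHexagon w) (j : ZMod 6) :
    0 ≤ wedge (w j) (w (j + 2)) := by
  rw [wedge_add_two_eq hw.antiperiodic, show j + 3 = j + 2 + 1 by ring]
  exact hw.wedge_succ_nonneg (j + 2)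

lemma sum_wedge_succ_nonneg (hw : IsSymmetricConvexHexagon w) :
    0 ≤ ∑ j, wedge (w j) (w (j + 1)) :=
  Finset.sum_nonneg fun j _ => hw.wedge_succ_nonneg j

lemma wedge_add_wedge_le (hw : IsSymmetricConvexHexagon w) (j k : ZMod 6) :
    wedge (w j) (w k) + wedge (w k) (w (j + 1)) ≤ wedge (w j) (w (j + 1)) := by
  have h₁ := hw.wedge_succ_nonneg j
  have h₂ := hw.wedge_add_two_le j
  have h₃ := hw.wedge_succ_le j
  have h₄ := wedge_anticomm (w (j + 1)) (w (j + 2))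
  rcases hw.antiperiodic.apply_eq_or_eq_neg j k with h | h | h | h | h | h <;>
    simp only [h, wedge_neg_left, wedge_neg_right, wedge_self] <;> linarith

lemma wedge_add_wedge_le_of_mem (hw : IsSymmetricConvexHexagon w) {x : ℝ × ℝ}
    (hx : x ∈ convexHull ℝ (range w)) (j : ZMod 6) :
    wedge (w j) x + wedge x (w (j + 1)) ≤ wedge (w j) (w (j + 1)) :=
  convexHull_min (range_subset_iff.2 fun k => hw.wedge_add_wedge_le j k)
    (convex_halfSpace_le (wedgeₗ (w j) + wedgeₗ.flip (w (j + 1))).isLinear _) hx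

lemma volume_convexHull_eq_zero (hw : IsSymmetricConvexHexagon w)
    (h₀ : ∑ i, wedge (w i) (w (i + 1)) = 0) : volume (convexHull ℝ (range w)) = 0 := by
  have hD (j : ZMod 6) : wedge (w j) (w (j + 1)) = 0 :=
    (Finset.sum_eq_zero_iff_of_nonneg fun j _ => hw.wedge_succ_nonneg j).1 h₀ j
      (Finset.mem_univ j)
  refine volume_convexHull_eq_zero_of_wedge_eq_zero fun j k => ?_
  have hE : wedge (w j) (w (j + 2)) = 0 := by
    rw [wedge_add_two_eq hw.antiperiodic, show j + 3 = j + 2 + 1 by ring, hD]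
  rcases hw.antiperiodic.apply_eq_or_eq_neg j k with h | h | h | h | h | h <;>
    simp [h, hD, hE]

lemma apply_ne_zero (hw : IsSymmetricConvexHexagon w) (hpos : 0 < ∑ i, wedge (w i) (w (i + 1)))
    (j : ZMod 6) : w j ≠ 0 := by
  intro h
  have := hw.wedge_succ_le j
  rw [sum_wedge_succ_eq hw.antiperiodic j, ← wedge_add_two_eq hw.antiperiodic] at hpos
  simp only [h, wedge_zero_left] at this hpos
  linarith

lemma wedge_succ_pos (hw : IsSymmetricConvexHexagon w) (hpos : 0 < ∑ i, wedge (w i) (w (i + 1)))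
    {j : ZMod 6} {x : ℝ × ℝ} (h₁ : 0 < wedge (w j) x) (h₂ : 0 < wedge x (w (j + 1))) :
    0 < wedge (w j) (w (j + 1)) := by
  refine (hw.wedge_succ_nonneg j).lt_of_ne fun h => ?_
  -- by Plücker, a point strictly inside a flat sector makes the hexagon flat
  have key := wedge_mul_wedge_add_wedge_mul (w j) (w (j + 1)) (w (j + 2)) x
  rw [← h, zero_mul] at key
  have hB := hw.wedge_succ_nonneg (j + 1)
  rw [show j + 1 + 1 = j + 2 by ring] at hB
  have hE := hw.wedge_add_two_nonneg j
  have hB₀ : wedge (w (j + 1)) (w (j + 2)) = 0 := by nlinarith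
  have hE₀ : wedge (w j) (w (j + 2)) = 0 := by nlinarith
  rw [sum_wedge_succ_eq hw.antiperiodic j, ← wedge_add_two_eq hw.antiperiodic, ← h, hB₀, hE₀]
    at hpos
  simp at hpos

lemma wedge_nonneg_of_mem (hw : IsSymmetricConvexHexagon w) {j : ZMod 6} {x : ℝ × ℝ}
    (hx : x ∈ convexHull ℝ {0, w j, w (j + 1)}) :
    0 ≤ wedge (w j) x ∧ 0 ≤ wedge x (w (j + 1)) ∧ 0 ≤ wedge x (w (j + 2)) := by
  have hA := hw.wedge_succ_nonneg j
  have hB := hw.wedge_succ_nonneg (j + 1)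
  rw [show j + 1 + 1 = j + 2 by ring] at hB
  exact ⟨convexHull_zero_pair_subset_setOf_nonneg (wedgeₗ (w j)) (by simp) (by simpa using hA) hx,
    convexHull_zero_pair_subset_setOf_nonneg (wedgeₗ.flip (w (j + 1))) (by simpa using hA)
      (by simp) hx,
    convexHull_zero_pair_subset_setOf_nonneg (wedgeₗ.flip (w (j + 2)))
      (by simpa using hw.wedge_add_two_nonneg j) (by simpa using hB) hx⟩

lemma inter_subset_iUnion_wedge_eq_zero (hw : IsSymmetricConvexHexagon w) {j k : ZMod 6}
    (hjk : j ≠ k) : convexHull ℝ {0, w j, w (j + 1)} ∩ convexHull ℝ {0, w k, w (k + 1)} ⊆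
      ⋃ i, {x | wedge (w i) x = 0} := by
  -- for `d = 1, 2, 3` the line through `0` and `w (j + d)` separates the two triangles
  have key (j d : ZMod 6) (hd : d = 1 ∨ d = 2 ∨ d = 3) :
      convexHull ℝ {0, w j, w (j + 1)} ∩ convexHull ℝ {0, w (j + d), w (j + d + 1)} ⊆
        ⋃ i, {x | wedge (w i) x = 0} := by
    rintro x ⟨hxj, hxd⟩
    refine mem_iUnion.2 ⟨j + d, show wedge (w (j + d)) x = 0 from ?_⟩
    obtain ⟨h₁, h₂, h₃⟩ := hw.wedge_nonneg_of_mem hxj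
    have h₄ := (hw.wedge_nonneg_of_mem hxd).1
    rcases hd with rfl | rfl | rfl
    · linarith [wedge_anticomm (w (j + 1)) x]
    · linarith [wedge_anticomm (w (j + 2)) x]
    · rw [hw.antiperiodic, wedge_neg_left] at h₄ ⊢
      linarith
  obtain ⟨d, rfl⟩ : ∃ d, k = j + d := ⟨k - j, by abel⟩
  have hd : ∀ d : ZMod 6, d ≠ 0 → d = 1 ∨ d = 2 ∨ d = 3 ∨ d = 4 ∨ d = 5 := by decide
  rcases hd d (by rintro rfl; simp at hjk) with rfl | rfl | rfl | rfl | rfl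
  · exact key j 1 (by simp)
  · exact key j 2 (by simp)
  · exact key j 3 (by simp)
  · rw [inter_comm]
    simpa [add_assoc, show (4 : ZMod 6) + 2 = 0 from rfl] using key (j + 4) 2 (by simp)
  · rw [inter_comm]
    simpa [add_assoc, show (5 : ZMod 6) + 1 = 0 from rfl] using key (j + 5) 1 (by simp)

lemma convexHull_subset_union (hw : IsSymmetricConvexHexagon w)
    (hpos : 0 < ∑ i, wedge (w i) (w (i + 1))) :
    convexHull ℝ (range w) ⊆
      (⋃ j, convexHull ℝ {0, w j, w (j + 1)}) ∪ ⋃ i, {x | wedge (w i) x = 0} := by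
  intro x hx
  by_cases hN : ∃ i, wedge (w i) x = 0
  · exact Or.inr (mem_iUnion.2 hN)
  simp only [not_exists] at hN
  obtain ⟨j, hj₁, hj₂⟩ := Antiperiodic.exists_pos_and_succ_neg (σ := fun i => wedge (w i) x)
    (fun i => by simp only [hw.antiperiodic i, wedge_neg_left]) hN
  have hj₂' : 0 < wedge x (w (j + 1)) := by
    rw [wedge_anticomm]
    linarith
  exact Or.inl <| mem_iUnion.2 ⟨j, mem_convexHull_zero_pair_of_wedge
    (hw.wedge_succ_pos hpos hj₁ hj₂') hj₁.le hj₂'.le (hw.wedge_add_wedge_le_of_mem hx j)⟩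

theorem volume_convexHull (hw : IsSymmetricConvexHexagon w) :
    volume (convexHull ℝ (range w)) = ENNReal.ofReal ((∑ j, wedge (w j) (w (j + 1))) / 2) := by
  rcases hw.sum_wedge_succ_nonneg.eq_or_lt with h₀ | hpos
  · rw [← h₀, zero_div, ENNReal.ofReal_zero, hw.volume_convexHull_eq_zero h₀.symm]
  have hN : volume (⋃ i, {x | wedge (w i) x = 0}) = 0 :=
    measure_iUnion_null fun i => volume_setOf_wedge_eq_zero (hw.apply_ne_zero hpos i)
  have hG : volume (convexHull ℝ (range w)) =
      volume (⋃ j, convexHull ℝ {0, w j, w (j + 1)}) :=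
    le_antisymm ((measure_mono (hw.convexHull_subset_union hpos)).trans
        ((measure_union_le _ _).trans (by rw [hN, add_zero])))
      (measure_mono (iUnion_subset (convexHull_zero_pair_subset_convexHull hw.antiperiodic)))
  rw [hG, measure_iUnion₀ (fun j k hjk => measure_mono_null
      (hw.inter_subset_iUnion_wedge_eq_zero hjk) hN)
    (fun j => ((toFinite _).isCompact_convexHull (𝕜 := ℝ)).isClosed.measurableSet.nullMeasurableSet),
    tsum_fintype, Finset.sum_div,
    ENNReal.ofReal_sum_of_nonneg fun j _ => by linarith [hw.wedge_succ_nonneg j]]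
  simp_rw [volume_convexHull_zero_pair, abs_of_nonneg (hw.wedge_succ_nonneg _)]

end IsSymmetricConvexHexagon

end SymmetricHexagon

section Midpoints

variable {w u : ZMod 6 → ℝ × ℝ}

lemma antiperiodic_midpoint (hs : Antiperiodic w 3)
    (hu : ∀ j, u j = midpoint ℝ (w j) (w (j + 1))) : Antiperiodic u 3 := fun j => by
  rw [hu, hu, add_right_comm, hs, hs, midpoint_eq_smul_add, midpoint_eq_smul_add, ← neg_add,
    smul_neg]

lemma midpoint_add_add_eq_zero (hs : Antiperiodic w 3)
    (hu : ∀ j, u j = midpoint ℝ (w j) (w (j + 1))) (j : ZMod 6) :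
    u j + u (j + 2) + u (j + 4) = 0 := by
  rw [hu, hu, hu, show j + 2 + 1 = j + 3 by ring, show j + 4 = j + 1 + 3 by ring,
    show j + 1 + 3 + 1 = j + 2 + 3 by ring, hs, hs, hs]
  simp only [midpoint_eq_smul_add]
  module

lemma midpoint_succ_sub (hs : Antiperiodic w 3)
    (hu : ∀ j, u j = midpoint ℝ (w j) (w (j + 1))) (j : ZMod 6) :
    u (j + 1) - u j = u (j + 2) := by
  have h := midpoint_add_add_eq_zero hs hu j
  rw [show j + 4 = j + 1 + 3 by ring, antiperiodic_midpoint hs hu] at h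
  rw [← sub_eq_zero, ← neg_eq_zero, ← h]
  abel

lemma four_mul_wedge_midpoint_succ (hs : Antiperiodic w 3)
    (hu : ∀ j, u j = midpoint ℝ (w j) (w (j + 1))) (j : ZMod 6) :
    4 * wedge (u j) (u (j + 1)) = (∑ i, wedge (w i) (w (i + 1))) / 2 := by
  rw [sum_wedge_succ_eq hs j, ← wedge_add_two_eq hs, hu, hu, show j + 1 + 1 = j + 2 by ring]
  simp only [midpoint_eq_smul_add, invOf_eq_inv, wedge, Prod.smul_fst, Prod.smul_snd,
    Prod.fst_add, Prod.snd_add, smul_eq_mul]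
  ring

lemma four_mul_wedge_midpoint_add_two (hs : Antiperiodic w 3)
    (hu : ∀ j, u j = midpoint ℝ (w j) (w (j + 1))) (j : ZMod 6) :
    4 * wedge (u j) (u (j + 2)) = (∑ i, wedge (w i) (w (i + 1))) / 2 := by
  rw [← midpoint_succ_sub hs hu, wedge_sub_right, wedge_self, sub_zero,
    four_mul_wedge_midpoint_succ hs hu]

lemma IsSymmetricConvexHexagon.midpoint (hw : IsSymmetricConvexHexagon w)
    (hu : ∀ j, u j = midpoint ℝ (w j) (w (j + 1))) : IsSymmetricConvexHexagon u where
  antiperiodic := antiperiodic_midpoint hw.antiperiodic hu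
  wedge_sub_nonneg j := by
    have h := four_mul_wedge_midpoint_succ hw.antiperiodic hu (j + 2)
    rw [midpoint_succ_sub hw.antiperiodic hu, ← show j + 1 + 1 = j + 2 by ring,
      midpoint_succ_sub hw.antiperiodic hu, show j + 1 + 1 = j + 2 by ring,
      show j + 1 + 2 = j + 2 + 1 by ring]
    linarith [hw.sum_wedge_succ_nonneg]

end Midpoints

theorem balancedHexagon_midpoints_general (K : Set (ℝ × ℝ))
    (w : ZMod 6 → ℝ × ℝ) (hw : IsBalancedHexagon K w)
    (u : ZMod 6 → ℝ × ℝ) (hu : ∀ j, u j = midpoint ℝ (w j) (w (j + 1))) :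
    (∀ j, u j + u (j + 2) + u (j + 4) = 0) ∧
    (∀ j, u (j + 3) = -u j) ∧
    (volume (convexHull ℝ (Set.range w))).toReal =
      (4 / 3) * (volume (convexHull ℝ (Set.range u))).toReal ∧
    (∀ j, (volume (convexHull ℝ (Set.range w))).toReal = 4 * wedge (u j) (u (j + 2))) := by
  have hw' : IsSymmetricConvexHexagon w := ⟨hw.1, hw.2.1⟩
  have hS := hw'.sum_wedge_succ_nonneg
  have hu₈ (j : ZMod 6) : wedge (u j) (u (j + 1)) = (∑ i, wedge (w i) (w (i + 1))) / 8 := by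
    linarith [four_mul_wedge_midpoint_succ hw.1 hu j]
  have hG := hw'.volume_convexHull
  have hH := (hw'.midpoint hu).volume_convexHull
  rw [Finset.sum_congr rfl fun j _ => hu₈ j, Finset.sum_const, Finset.card_univ, ZMod.card,
    nsmul_eq_mul] at hH
  refine ⟨midpoint_add_add_eq_zero hw.1 hu, antiperiodic_midpoint hw.1 hu, ?_, fun j => ?_⟩
  · rw [hG, hH, ENNReal.toReal_ofReal (by positivity), ENNReal.toReal_ofReal (by positivity)]
    ring
  · rw [hG, ENNReal.toReal_ofReal (by positivity), four_mul_wedge_midpoint_add_two hw.1 hu j]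

/-- Properties of the midpoints `u j` of a balanced hexagon `G` of a centrally
symmetric convex domain `K` centered at the origin:
(i) `u j + u (j+2) + u (j+4) = 0`; (ii) `u (j+3) = -u j`;
(iii) `area G = (4/3) · area H` where `H` is the convex hull of the midpoints;
(iv) `area G = 4 · (u j ∧ u (j+2))` (eight times the area of the triangle
`{0, u j, u (j+2)}`). -/
theorem balancedHexagon_midpoints (K : Set (ℝ × ℝ)) (hK : IsCSCD K)
    (w : ZMod 6 → ℝ × ℝ) (hw : IsBalancedHexagon K w)
    (u : ZMod 6 → ℝ × ℝ) (hu : ∀ j, u j = midpoint ℝ (w j) (w (j + 1))) :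
    (∀ j, u j + u (j + 2) + u (j + 4) = 0) ∧
    (∀ j, u (j + 3) = -u j) ∧
    (volume (convexHull ℝ (Set.range w))).toReal =
      (4 / 3) * (volume (convexHull ℝ (Set.range u))).toReal ∧
    (∀ j, (volume (convexHull ℝ (Set.range w))).toReal = 4 * wedge (u j) (u (j + 2))) :=
  balancedHexagon_midpoints_general K w hw u hu
end
end
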